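/- arXiv:2412.10614 — 5 statements merged into one kernel-verified Lean document; each statement's English description precedes it below -/
import Mathlib

section
/- Let B ∈ ℂ^{m×g}, C ∈ ℂ^{h×n}, A ∈ ℂ^{m×n}. If X ∈ ℂ^{g×h} satisfies the normal equation B*·B·X·C·C* = B*·A·C*, then B·X·C = B·B†·A·C†·C. In particular the optimal approximation B·X·C is uniquely determined. -/
/-! Multiplying the normal equation by `B†ᴴ` on the left and by `C†ᴴ` on the right turns
`Bᴴ` into the orthogonal projector `B B†` and `Cᴴ` into `C† C`. These projectors fix `B X C`,
so the left-hand side becomes `B X C` and the right-hand side `B B† A C† C`. -/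

open Matrix

noncomputable def frob {m n : Type*} [Fintype m] [Fintype n] (A : Matrix m n ℂ) : ℝ :=
  Real.sqrt (∑ i, ∑ j, ‖A i j‖ ^ 2)

def IsMPInv {m n : Type*} [Fintype m] [Fintype n]
    (B : Matrix m n ℂ) (Bd : Matrix n m ℂ) : Prop :=
  B * Bd * B = B ∧ Bd * B * Bd = Bd ∧ (B * Bd)ᴴ = B * Bd ∧ (Bd * B)ᴴ = Bd * B

namespace IsMPInv

variable {m n g h : Type*} [Fintype m] [Fintype n] [Fintype g] [Fintype h]

theorem conjTranspose_pinv_mul_conjTranspose {B : Matrix m g ℂ} {Bd : Matrix g m ℂ}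
    (hB : IsMPInv B Bd) : Bdᴴ * Bᴴ = B * Bd := by
  rw [← conjTranspose_mul, hB.2.2.1]

theorem conjTranspose_mul_conjTranspose_pinv {C : Matrix h n ℂ} {Cd : Matrix n h ℂ}
    (hC : IsMPInv C Cd) : Cᴴ * Cdᴴ = Cd * C := by
  rw [← conjTranspose_mul, hC.2.2.2]

theorem proj_mul_proj_eq_of_conjTranspose_mul_mul_conjTranspose_eq
    {B : Matrix m g ℂ} {Bd : Matrix g m ℂ} {C : Matrix h n ℂ} {Cd : Matrix n h ℂ}
    (hB : IsMPInv B Bd) (hC : IsMPInv C Cd) {M N : Matrix m n ℂ}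
    (hMN : Bᴴ * M * Cᴴ = Bᴴ * N * Cᴴ) :
    B * Bd * M * (Cd * C) = B * Bd * N * (Cd * C) := by
  have hsandwich (P : Matrix m n ℂ) : Bdᴴ * (Bᴴ * P * Cᴴ) * Cdᴴ = B * Bd * P * (Cd * C) := by
    rw [← hB.conjTranspose_pinv_mul_conjTranspose, ← hC.conjTranspose_mul_conjTranspose_pinv]
    simp only [Matrix.mul_assoc]
  rw [← hsandwich, ← hsandwich, hMN]

end IsMPInv

theorem stmt2 {m n g h : ℕ} (A : Matrix (Fin m) (Fin n) ℂ)
    (B : Matrix (Fin m) (Fin g) ℂ) (Bd : Matrix (Fin g) (Fin m) ℂ)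
    (C : Matrix (Fin h) (Fin n) ℂ) (Cd : Matrix (Fin n) (Fin h) ℂ)
    (hB : IsMPInv B Bd) (hC : IsMPInv C Cd)
    (X : Matrix (Fin g) (Fin h) ℂ)
    (hX : Bᴴ * B * X * C * Cᴴ = Bᴴ * A * Cᴴ) :
    B * X * C = B * Bd * A * Cd * C := by
  have hBXC : Bᴴ * (B * X * C) * Cᴴ = Bᴴ * A * Cᴴ := by
    simpa only [Matrix.mul_assoc] using hX
  calc B * X * C = B * Bd * B * X * (C * Cd * C) := by rw [hB.1, hC.1]
    _ = B * Bd * (B * X * C) * (Cd * C) := by simp only [Matrix.mul_assoc]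
    _ = B * Bd * A * (Cd * C) :=
        IsMPInv.proj_mul_proj_eq_of_conjTranspose_mul_mul_conjTranspose_eq hB hC hBXC
    _ = B * Bd * A * Cd * C := by rw [Matrix.mul_assoc _ Cd C]
end

section
/- Let R ∈ ℂ^{(m₁+m₂)×n} be the vertical block matrix with top block R₁ ∈ ℂ^{m₁×n} and bottom block R₂ ∈ ℂ^{m₂×n}, and let S = [R₁† | R₂†] ∈ ℂ^{n×(m₁+m₂)} be the horizontal block matrix of the Moore–Penrose inverses. Then S = R† if and only if R·S·R = R. -/
open Matrix

/-
Write R = [R₁; R₂] and S = [R₁† | R₂†]. Since Rᵢ Rᵢ† Rᵢ = Rᵢ, the identity R S R = R says exactly that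
the cross terms R₁ R₂† R₂ and R₂ R₁† R₁ vanish; multiplying on the right by R₂† (resp. R₁†) and using
Rᵢ† Rᵢ Rᵢ† = Rᵢ† gives R₁ R₂† = 0 and R₂ R₁† = 0. Then R S is block diagonal with the Hermitian blocks
Rᵢ Rᵢ†, S R = R₁† R₁ + R₂† R₂ is Hermitian, and the remaining Penrose conditions hold blockwise.
-/

section Ring

variable {α : Type*} {k l m m₁ m₂ : Type*} [Fintype k] [Fintype l] [Fintype m₁] [Fintype m₂]

theorem Matrix.mul_eq_zero_of_mul_mul_eq_zero [NonUnitalSemiring α]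
    {A : Matrix m k α} {Bd : Matrix k l α} {B : Matrix l k α}
    (hBd : Bd * B * Bd = Bd) (h : A * Bd * B = 0) : A * Bd = 0 := by
  calc A * Bd = A * (Bd * B * Bd) := by rw [hBd]
    _ = A * Bd * B * Bd := by simp only [Matrix.mul_assoc]
    _ = 0 := by rw [h, Matrix.zero_mul]

theorem Matrix.fromRows_mul_fromCols_mul_fromRows_eq_self_iff [Ring α]
    {R₁ : Matrix m₁ k α} {R₂ : Matrix m₂ k α} {R₁d : Matrix k m₁ α} {R₂d : Matrix k m₂ α}
    (h₁ : R₁ * R₁d * R₁ = R₁) (h₂ : R₂ * R₂d * R₂ = R₂) :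
    fromRows R₁ R₂ * fromCols R₁d R₂d * fromRows R₁ R₂ = fromRows R₁ R₂ ↔
      R₁ * R₂d * R₂ = 0 ∧ R₂ * R₁d * R₁ = 0 := by
  rw [Matrix.mul_assoc, fromCols_mul_fromRows, fromRows_mul, fromRows_ext_iff,
    Matrix.mul_add, Matrix.mul_add, ← Matrix.mul_assoc, ← Matrix.mul_assoc, ← Matrix.mul_assoc,
    ← Matrix.mul_assoc, h₁, h₂, add_eq_left, add_eq_right]

end Ring

variable {k m₁ m₂ : Type*} [Fintype k] [Fintype m₁] [Fintype m₂]

theorem IsMPInv.fromRows_fromCols {R₁ : Matrix m₁ k ℂ} {R₂ : Matrix m₂ k ℂ}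
    {R₁d : Matrix k m₁ ℂ} {R₂d : Matrix k m₂ ℂ} (h₁ : IsMPInv R₁ R₁d) (h₂ : IsMPInv R₂ R₂d)
    (h₁₂ : R₁ * R₂d = 0) (h₂₁ : R₂ * R₁d = 0) :
    IsMPInv (fromRows R₁ R₂) (fromCols R₁d R₂d) := by
  obtain ⟨a₁, a₂, a₃, a₄⟩ := h₁
  obtain ⟨b₁, b₂, b₃, b₄⟩ := h₂
  have hRS : fromRows R₁ R₂ * fromCols R₁d R₂d = fromBlocks (R₁ * R₁d) 0 0 (R₂ * R₂d) := by
    rw [fromRows_mul_fromCols, h₁₂, h₂₁]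
  refine ⟨?_, ?_, ?_, ?_⟩
  · rw [hRS, fromBlocks_mul_fromRows, Matrix.zero_mul, Matrix.zero_mul, add_zero, zero_add, a₁, b₁]
  · rw [fromCols_mul_fromRows, mul_fromCols, Matrix.add_mul, Matrix.add_mul, a₂, b₂,
      Matrix.mul_assoc R₂d, h₂₁, Matrix.mul_assoc R₁d, h₁₂, Matrix.mul_zero, Matrix.mul_zero,
      add_zero, zero_add]
  · rw [hRS, fromBlocks_conjTranspose, a₃, b₃, conjTranspose_zero, conjTranspose_zero]
  · rw [fromCols_mul_fromRows, conjTranspose_add, a₄, b₄]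

theorem stmt5 {m₁ m₂ n : ℕ}
    (R₁ : Matrix (Fin m₁) (Fin n) ℂ) (R₂ : Matrix (Fin m₂) (Fin n) ℂ)
    (R₁d : Matrix (Fin n) (Fin m₁) ℂ) (R₂d : Matrix (Fin n) (Fin m₂) ℂ)
    (h₁ : IsMPInv R₁ R₁d) (h₂ : IsMPInv R₂ R₂d) :
    IsMPInv (fromRows R₁ R₂) (fromCols R₁d R₂d) ↔
      fromRows R₁ R₂ * fromCols R₁d R₂d * fromRows R₁ R₂ = fromRows R₁ R₂ := by
  refine ⟨And.left, fun h => ?_⟩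
  obtain ⟨hcross₁₂, hcross₂₁⟩ :=
    (fromRows_mul_fromCols_mul_fromRows_eq_self_iff h₁.1 h₂.1).mp h
  exact h₁.fromRows_fromCols h₂ (mul_eq_zero_of_mul_mul_eq_zero h₂.2.1 hcross₁₂)
    (mul_eq_zero_of_mul_mul_eq_zero h₁.2.1 hcross₂₁)
end

section
/- Let R ∈ ℂ^{(m₁+m₂)×n} be the vertical block matrix with blocks R₁ ∈ ℂ^{m₁×n} and R₂ ∈ ℂ^{m₂×n}, and S = [R₁† | R₂†]. If the column space of R₂* is contained in the null space of R₁ (equivalently R₁·R₂* = 0), then S = R†. -/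
open Matrix

namespace IsMPInv

variable {k m m₁ m₂ n : Type*} [Fintype m] [Fintype m₁] [Fintype m₂] [Fintype n]

theorem mul_eq_zero_of_mul_conjTranspose_eq_zero {B : Matrix m n ℂ} {Bd : Matrix n m ℂ}
    (h : IsMPInv B Bd) {A : Matrix k n ℂ} (hA : A * Bᴴ = 0) : A * Bd = 0 := by
  obtain ⟨-, h₂, -, h₄⟩ := h
  calc A * Bd = A * ((Bd * B)ᴴ * Bd) := by rw [h₄, h₂]
    _ = A * Bᴴ * (Bdᴴ * Bd) := by simp only [conjTranspose_mul, Matrix.mul_assoc]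
    _ = 0 := by rw [hA, Matrix.zero_mul]

theorem fromRows_fromCols_s6 {R₁ : Matrix m₁ n ℂ} {R₂ : Matrix m₂ n ℂ}
    {R₁d : Matrix n m₁ ℂ} {R₂d : Matrix n m₂ ℂ}
    (h₁ : IsMPInv R₁ R₁d) (h₂ : IsMPInv R₂ R₂d)
    (h₁₂ : R₁ * R₂d = 0) (h₂₁ : R₂ * R₁d = 0) :
    IsMPInv (fromRows R₁ R₂) (fromCols R₁d R₂d) := by
  obtain ⟨a₁, a₂, a₃, a₄⟩ := h₁
  obtain ⟨b₁, b₂, b₃, b₄⟩ := h₂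
  have hBBd : fromRows R₁ R₂ * fromCols R₁d R₂d = fromBlocks (R₁ * R₁d) 0 0 (R₂ * R₂d) := by
    rw [fromRows_mul_fromCols, h₁₂, h₂₁]
  have hBdB : fromCols R₁d R₂d * fromRows R₁ R₂ = R₁d * R₁ + R₂d * R₂ :=
    fromCols_mul_fromRows _ _ _ _
  refine ⟨?_, ?_, ?_, ?_⟩
  · rw [hBBd, fromBlocks_mul_fromRows]
    simp [a₁, b₁]
  · rw [hBdB, mul_fromCols, Matrix.add_mul, Matrix.add_mul, Matrix.mul_assoc R₂d,
      Matrix.mul_assoc R₁d R₁ R₂d, h₁₂, h₂₁, a₂, b₂]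
    simp
  · rw [hBBd, fromBlocks_conjTranspose, a₃, b₃]
    simp
  · rw [hBdB, conjTranspose_add, a₄, b₄]

end IsMPInv

theorem stmt6 {m₁ m₂ n : ℕ}
    (R₁ : Matrix (Fin m₁) (Fin n) ℂ) (R₂ : Matrix (Fin m₂) (Fin n) ℂ)
    (R₁d : Matrix (Fin n) (Fin m₁) ℂ) (R₂d : Matrix (Fin n) (Fin m₂) ℂ)
    (h₁ : IsMPInv R₁ R₁d) (h₂ : IsMPInv R₂ R₂d)
    (horth : R₁ * R₂ᴴ = 0) :
    IsMPInv (fromRows R₁ R₂) (fromCols R₁d R₂d) := by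
  have horth' : R₂ * R₁ᴴ = 0 := by simpa using congrArg conjTranspose horth
  exact h₁.fromRows_fromCols_s6 h₂ (h₂.mul_eq_zero_of_mul_conjTranspose_eq_zero horth)
    (h₁.mul_eq_zero_of_mul_conjTranspose_eq_zero horth')
end

section
/- Let R₁ ∈ ℂ^{m₁×n} and R₂ ∈ ℂ^{m₂×n}, define R₂⁽¹⁾ = R₂·(I − R₁†·R₁), and let R⁽¹⁾ be the vertical block matrix with blocks R₁ and R₂⁽¹⁾. Then the Moore–Penrose inverse of R⁽¹⁾ is the horizontal block matrix [R₁† | (R₂⁽¹⁾)†]. -/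
open Matrix

/-!
Write `P = 1 - R₁† R₁` for the orthogonal projector onto the kernel of `R₁`. The block
`R₂⁽¹⁾ = R₂ P` satisfies `R₂⁽¹⁾ R₁† = 0` because `P R₁† = 0`, and `R₁ (R₂⁽¹⁾)† = 0` because
`(R₂⁽¹⁾)†` factors through `(R₂⁽¹⁾)ᴴ = P R₂ᴴ` and `R₁ P = 0`. For two blocks whose
Moore–Penrose inverses annihilate each other in this way, the four Penrose conditions for
the stacked matrix split blockwise into those of the two blocks.
-/

namespace IsMPInv

variable {m n : Type*} [Fintype m] [Fintype n] {B : Matrix m n ℂ} {Bd : Matrix n m ℂ}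

section Projector

variable [DecidableEq n]

theorem mul_one_sub_pinv_mul (h : IsMPInv B Bd) : B * (1 - Bd * B) = 0 := by
  rw [Matrix.mul_sub, Matrix.mul_one, ← Matrix.mul_assoc, h.1, sub_self]

theorem one_sub_pinv_mul_mul_pinv (h : IsMPInv B Bd) : (1 - Bd * B) * Bd = 0 := by
  rw [Matrix.sub_mul, Matrix.one_mul, h.2.1, sub_self]

theorem conjTranspose_one_sub_pinv_mul (h : IsMPInv B Bd) :
    (1 - Bd * B)ᴴ = 1 - Bd * B := by
  rw [conjTranspose_sub, conjTranspose_one, h.2.2.2]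

end Projector

theorem pinv_eq_conjTranspose_mul (h : IsMPInv B Bd) : Bd = Bᴴ * (Bdᴴ * Bd) := by
  conv_lhs => rw [← h.2.1, ← h.2.2.2]
  rw [conjTranspose_mul, Matrix.mul_assoc]

theorem mul_pinv_eq_zero {k : Type*} [Fintype k] {C : Matrix k n ℂ} (h : IsMPInv B Bd)
    (hC : C * Bᴴ = 0) : C * Bd = 0 := by
  rw [h.pinv_eq_conjTranspose_mul, ← Matrix.mul_assoc, hC, Matrix.zero_mul]

theorem fromRows_fromCols_s8 {m' : Type*} [Fintype m'] {A : Matrix m' n ℂ} {Ad : Matrix n m' ℂ}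
    (hA : IsMPInv A Ad) (hB : IsMPInv B Bd) (hABd : A * Bd = 0) (hBAd : B * Ad = 0) :
    IsMPInv (fromRows A B) (fromCols Ad Bd) := by
  obtain ⟨a1, a2, a3, a4⟩ := hA
  obtain ⟨b1, b2, b3, b4⟩ := hB
  have hdiag : fromRows A B * fromCols Ad Bd = fromBlocks (A * Ad) 0 0 (B * Bd) := by
    rw [fromRows_mul_fromCols, hABd, hBAd]
  refine ⟨?_, ?_, ?_, ?_⟩
  · rw [hdiag, fromBlocks_mul_fromRows, Matrix.zero_mul, Matrix.zero_mul, add_zero, zero_add,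
      a1, b1]
  · rw [fromCols_mul_fromRows, mul_fromCols, Matrix.add_mul, Matrix.add_mul,
      Matrix.mul_assoc Bd B Ad, hBAd, Matrix.mul_zero, add_zero, a2,
      Matrix.mul_assoc Ad A Bd, hABd, Matrix.mul_zero, zero_add, b2]
  · rw [hdiag, fromBlocks_conjTranspose, a3, b3, conjTranspose_zero, conjTranspose_zero]
  · rw [fromCols_mul_fromRows, conjTranspose_add, a4, b4]

end IsMPInv

theorem stmt8 {m₁ m₂ n : ℕ}
    (R₁ : Matrix (Fin m₁) (Fin n) ℂ) (R₂ : Matrix (Fin m₂) (Fin n) ℂ)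
    (R₁d : Matrix (Fin n) (Fin m₁) ℂ) (R₂d : Matrix (Fin n) (Fin m₂) ℂ)
    (h₁ : IsMPInv R₁ R₁d) (h₂ : IsMPInv (R₂ * (1 - R₁d * R₁)) R₂d) :
    IsMPInv (fromRows R₁ (R₂ * (1 - R₁d * R₁))) (fromCols R₁d R₂d) := by
  have hR₁R₂d : R₁ * R₂d = 0 := h₂.mul_pinv_eq_zero <| by
    rw [conjTranspose_mul, h₁.conjTranspose_one_sub_pinv_mul, ← Matrix.mul_assoc,
      h₁.mul_one_sub_pinv_mul, Matrix.zero_mul]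
  have hR₂R₁d : R₂ * (1 - R₁d * R₁) * R₁d = 0 := by
    rw [Matrix.mul_assoc, h₁.one_sub_pinv_mul_mul_pinv, Matrix.mul_zero]
  exact h₁.fromRows_fromCols_s8 h₂ hR₁R₂d hR₂R₁d
end

section
/- Let B₁ ∈ ℂ^{m×g₁}, B₂ ∈ ℂ^{m×g₂}, C₁ ∈ ℂ^{h₁×n}, C₂ ∈ ℂ^{h₂×n}, and A ∈ ℂ^{m×n}. Suppose B₁*·B₂ = 0 and C₁·C₂* = 0 (mutually orthogonal column spaces of the Bᵢ and row spaces of the Cⱼ). Then the matrices Xᵢⱼ = Bᵢ†·A·Cⱼ† (i,j ∈ {1,2}) satisfy the normal equation B*·B·X·C·C* = B*·A·C*, where B = [B₁ B₂], C is the vertical stack of C₁, C₂, and X = [Xᵢⱼ] is the corresponding 2×2 block matrix; hence they minimize ‖A − Σᵢⱼ Bᵢ·Xᵢⱼ·Cⱼ‖_F. -/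
open Matrix

/-!
The normal equation says that the residual `A - B X C` is orthogonal, for the trace inner product
`⟨M, N⟩ = tr (Mᴴ N)`, to every `B D C`; Pythagoras then makes `X` a least-squares solution.
The orthogonality hypotheses make `Bᴴ B` and `C Cᴴ` block diagonal, so the normal equation splits
into the four block equations `Bᵢᴴ Bᵢ Xᵢⱼ Cⱼ Cⱼᴴ = Bᵢᴴ A Cⱼᴴ`, and `Xᵢⱼ = Bᵢ† A Cⱼ†` solves each of
them because `Bᴴ B B† = Bᴴ` and `C† C Cᴴ = Cᴴ` for Moore–Penrose inverses.
-/

section Frobenius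

variable {m n : Type*} [Fintype m] [Fintype n]

lemma frob_sq (A : Matrix m n ℂ) : frob A ^ 2 = ∑ i, ∑ j, ‖A i j‖ ^ 2 :=
  Real.sq_sqrt (by positivity)

lemma trace_conjTranspose_mul_eq_sum (M N : Matrix m n ℂ) :
    (Mᴴ * N).trace = ∑ i, ∑ j, star (M i j) * N i j := by
  rw [trace, Finset.sum_comm]
  simp only [diag_apply, mul_apply, conjTranspose_apply]

lemma frob_add_sq (M N : Matrix m n ℂ) :
    frob (M + N) ^ 2 = frob M ^ 2 + frob N ^ 2 + 2 * (Mᴴ * N).trace.re := by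
  have norm_add_sq (a b : ℂ) : ‖a + b‖ ^ 2 = ‖a‖ ^ 2 + ‖b‖ ^ 2 + 2 * (star a * b).re := by
    simp [← Complex.normSq_eq_norm_sq, Complex.normSq_add]
  simp only [frob_sq, trace_conjTranspose_mul_eq_sum, Matrix.add_apply, norm_add_sq,
    Complex.re_sum, Finset.sum_add_distrib, Finset.mul_sum]

lemma frob_le_frob_add_of_trace_eq_zero {M N : Matrix m n ℂ} (h : (Mᴴ * N).trace = 0) :
    frob M ≤ frob (M + N) := by
  have hsq : frob M ^ 2 ≤ frob (M + N) ^ 2 := by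
    rw [frob_add_sq, h, Complex.zero_re]
    nlinarith [sq_nonneg (frob N)]
  exact (pow_le_pow_iff_left₀ (Real.sqrt_nonneg _) (Real.sqrt_nonneg _) two_ne_zero).1 hsq

lemma frob_le_of_normal_equation {g h : Type*} [Fintype g] [Fintype h]
    {A : Matrix m n ℂ} {B : Matrix m g ℂ} {C : Matrix h n ℂ} {X : Matrix g h ℂ}
    (hX : Bᴴ * B * X * C * Cᴴ = Bᴴ * A * Cᴴ) (X' : Matrix g h ℂ) :
    frob (A - B * X * C) ≤ frob (A - B * X' * C) := by
  set R := A - B * X * C with hR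
  have hres : Bᴴ * R * Cᴴ = 0 := by
    rw [Matrix.mul_sub, Matrix.sub_mul, ← hX]
    simp only [Matrix.mul_assoc, sub_self]
  have hres' : C * Rᴴ * B = 0 := by
    simpa [conjTranspose_mul, Matrix.mul_assoc] using congrArg conjTranspose hres
  have horth : (Rᴴ * (B * (X - X') * C)).trace = 0 := calc
    _ = (Rᴴ * B * (X - X') * C).trace := by simp only [Matrix.mul_assoc]
    _ = (C * Rᴴ * B * (X - X')).trace := by rw [trace_mul_comm]; simp only [Matrix.mul_assoc]
    _ = 0 := by rw [hres', Matrix.zero_mul, trace_zero]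
  have hsplit : A - B * X' * C = R + B * (X - X') * C := by
    rw [Matrix.mul_sub, Matrix.sub_mul, hR]; abel
  rw [hsplit]
  exact frob_le_frob_add_of_trace_eq_zero horth

end Frobenius

namespace IsMPInv

variable {m n : Type*} [Fintype m] [Fintype n]

lemma conjTranspose_mul_self_mul {B : Matrix m n ℂ} {Bd : Matrix n m ℂ} (hB : IsMPInv B Bd) :
    Bᴴ * B * Bd = Bᴴ := by
  obtain ⟨hBBdB, -, hBBd, -⟩ := hB
  rw [Matrix.mul_assoc, ← hBBd, ← conjTranspose_mul, hBBdB]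

lemma mul_self_mul_conjTranspose {C : Matrix m n ℂ} {Cd : Matrix n m ℂ} (hC : IsMPInv C Cd) :
    Cd * C * Cᴴ = Cᴴ := by
  obtain ⟨hCCdC, -, -, hCdC⟩ := hC
  rw [← hCdC, ← conjTranspose_mul, ← Matrix.mul_assoc, hCCdC]

lemma normal_equation {g h : Type*} [Fintype g] [Fintype h]
    {B : Matrix m g ℂ} {Bd : Matrix g m ℂ} {C : Matrix h n ℂ} {Cd : Matrix n h ℂ}
    (hB : IsMPInv B Bd) (hC : IsMPInv C Cd) (A : Matrix m n ℂ) :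
    Bᴴ * B * (Bd * A * Cd) * (C * Cᴴ) = Bᴴ * A * Cᴴ := by
  calc Bᴴ * B * (Bd * A * Cd) * (C * Cᴴ) = Bᴴ * B * Bd * A * (Cd * C * Cᴴ) := by
        simp only [Matrix.mul_assoc]
    _ = Bᴴ * A * Cᴴ := by rw [hB.conjTranspose_mul_self_mul, hC.mul_self_mul_conjTranspose]

end IsMPInv

section Blocks

variable {m n g₁ g₂ h₁ h₂ : Type*} [Fintype m] [Fintype n]

lemma conjTranspose_fromCols_mul_fromCols {B₁ : Matrix m g₁ ℂ} {B₂ : Matrix m g₂ ℂ}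
    (hB : B₁ᴴ * B₂ = 0) :
    (fromCols B₁ B₂)ᴴ * fromCols B₁ B₂ = fromBlocks (B₁ᴴ * B₁) 0 0 (B₂ᴴ * B₂) := by
  have hB' : B₂ᴴ * B₁ = 0 := by simpa using congrArg conjTranspose hB
  rw [conjTranspose_fromCols_eq_fromRows_conjTranspose, fromRows_mul_fromCols, hB, hB']

lemma fromRows_mul_conjTranspose_fromRows {C₁ : Matrix h₁ n ℂ} {C₂ : Matrix h₂ n ℂ}
    (hC : C₁ * C₂ᴴ = 0) :
    fromRows C₁ C₂ * (fromRows C₁ C₂)ᴴ = fromBlocks (C₁ * C₁ᴴ) 0 0 (C₂ * C₂ᴴ) := by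
  have hC' : C₂ * C₁ᴴ = 0 := by simpa using congrArg conjTranspose hC
  rw [conjTranspose_fromRows_eq_fromCols_conjTranspose, fromRows_mul_fromCols, hC, hC']

lemma conjTranspose_fromCols_mul_mul_conjTranspose_fromRows (A : Matrix m n ℂ)
    (B₁ : Matrix m g₁ ℂ) (B₂ : Matrix m g₂ ℂ) (C₁ : Matrix h₁ n ℂ) (C₂ : Matrix h₂ n ℂ) :
    (fromCols B₁ B₂)ᴴ * A * (fromRows C₁ C₂)ᴴ =
      fromBlocks (B₁ᴴ * A * C₁ᴴ) (B₁ᴴ * A * C₂ᴴ) (B₂ᴴ * A * C₁ᴴ) (B₂ᴴ * A * C₂ᴴ) := by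
  rw [conjTranspose_fromCols_eq_fromRows_conjTranspose,
    conjTranspose_fromRows_eq_fromCols_conjTranspose, fromRows_mul, fromRows_mul_fromCols]

lemma fromBlocks_pinv_normal_equation [Fintype g₁] [Fintype g₂] [Fintype h₁] [Fintype h₂]
    (A : Matrix m n ℂ)
    {B₁ : Matrix m g₁ ℂ} {B₂ : Matrix m g₂ ℂ} {C₁ : Matrix h₁ n ℂ} {C₂ : Matrix h₂ n ℂ}
    {B₁d : Matrix g₁ m ℂ} {B₂d : Matrix g₂ m ℂ} {C₁d : Matrix n h₁ ℂ} {C₂d : Matrix n h₂ ℂ}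
    (hB₁ : IsMPInv B₁ B₁d) (hB₂ : IsMPInv B₂ B₂d) (hC₁ : IsMPInv C₁ C₁d) (hC₂ : IsMPInv C₂ C₂d)
    (hB : B₁ᴴ * B₂ = 0) (hC : C₁ * C₂ᴴ = 0) :
    letI B := fromCols B₁ B₂
    letI C := fromRows C₁ C₂
    Bᴴ * B * fromBlocks (B₁d * A * C₁d) (B₁d * A * C₂d) (B₂d * A * C₁d) (B₂d * A * C₂d) * C * Cᴴ
      = Bᴴ * A * Cᴴ := by
  rw [Matrix.mul_assoc _ (fromRows C₁ C₂), conjTranspose_fromCols_mul_fromCols hB,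
    fromRows_mul_conjTranspose_fromRows hC, fromBlocks_multiply, fromBlocks_multiply,
    conjTranspose_fromCols_mul_mul_conjTranspose_fromRows]
  simp only [Matrix.zero_mul, Matrix.mul_zero, add_zero, zero_add, hB₁.normal_equation hC₁,
    hB₁.normal_equation hC₂, hB₂.normal_equation hC₁, hB₂.normal_equation hC₂]

end Blocks

theorem stmt13 {m n g₁ g₂ h₁ h₂ : ℕ}
    (A : Matrix (Fin m) (Fin n) ℂ)
    (B₁ : Matrix (Fin m) (Fin g₁) ℂ) (B₂ : Matrix (Fin m) (Fin g₂) ℂ)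
    (C₁ : Matrix (Fin h₁) (Fin n) ℂ) (C₂ : Matrix (Fin h₂) (Fin n) ℂ)
    (B₁d : Matrix (Fin g₁) (Fin m) ℂ) (B₂d : Matrix (Fin g₂) (Fin m) ℂ)
    (C₁d : Matrix (Fin n) (Fin h₁) ℂ) (C₂d : Matrix (Fin n) (Fin h₂) ℂ)
    (hB₁ : IsMPInv B₁ B₁d) (hB₂ : IsMPInv B₂ B₂d)
    (hC₁ : IsMPInv C₁ C₁d) (hC₂ : IsMPInv C₂ C₂d)
    (hBorth : B₁ᴴ * B₂ = 0) (hCorth : C₁ * C₂ᴴ = 0) :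
    letI B := fromCols B₁ B₂
    letI C := fromRows C₁ C₂
    letI X := fromBlocks (B₁d * A * C₁d) (B₁d * A * C₂d) (B₂d * A * C₁d) (B₂d * A * C₂d)
    Bᴴ * B * X * C * Cᴴ = Bᴴ * A * Cᴴ ∧
      ∀ X' : Matrix (Fin g₁ ⊕ Fin g₂) (Fin h₁ ⊕ Fin h₂) ℂ,
        frob (A - B * X * C) ≤ frob (A - B * X' * C) := by
  have hX := fromBlocks_pinv_normal_equation A hB₁ hB₂ hC₁ hC₂ hBorth hCorth
  exact ⟨hX, frob_le_of_normal_equation hX⟩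
end
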